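/- For every integer m ≥ 1 there is a (unique) ring endomorphism γ_m of R₀ with γ_m(q) = q^m and γ_m(ε) = ε·q^{m−1}·[m]_q. These endomorphisms satisfy γ_m ∘ γ_{m'} = γ_{m·m'} for all m, m' ≥ 1, and they are equivariant for ψ: for every f ∈ ℤ[q], γ_m(ψ(f)) = ψ(f(q^m)); in particular γ_m(q + ε·[p]_q) = q^m + ε·q^{m−1}·[p·m]_q. (This is the integer-exponent form of the 𝔽_p^×-equivariance of ψ, where u ∈ 𝔽_p^× acts through the Teichmüller lift.) -/

import Mathlib

open Finset

/-- The q-analogue `[n]_t = ∑_{i=0}^{n-1} t^i`. -/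
def qan {A : Type*} [CommRing A] (t : A) (n : ℕ) : A := ∑ i ∈ Finset.range n, t ^ i

/-- The polynomial `ε² − q·(q−1)·ε` over `ℤ[q]`. -/
noncomputable def relPoly : Polynomial (Polynomial ℤ) :=
  Polynomial.X ^ 2 -
    Polynomial.C (Polynomial.X * (Polynomial.X - 1) : Polynomial ℤ) * Polynomial.X

/-- `R₀ := ℤ[q][ε]/(ε² − q·(q−1)·ε)`, a free `ℤ[q]`-module with basis `1, ε`. -/
noncomputable abbrev R₀ := AdjoinRoot relPoly

/-- `q ∈ R₀`. -/
noncomputable def qR : R₀ := algebraMap (Polynomial ℤ) R₀ Polynomial.X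

/-- `ε ∈ R₀`. -/
noncomputable def epsR : R₀ := AdjoinRoot.root relPoly

/-- `ψ : ℤ[q] → R₀` is the ring homomorphism given by evaluation at `q + ε·[p]_q`. -/
noncomputable def psiMap (p : ℕ) : Polynomial ℤ →+* R₀ :=
  (Polynomial.aeval (qR + epsR * qan qR p) : Polynomial ℤ →ₐ[ℤ] R₀).toRingHom

/-!
Since `ε² = q(q−1)ε`, a ring map out of `R₀` is the same as a pair `(t, e)` with
`e² = t(t−1)e`, and `(q^m, ε q^{m−1} [m]_q)` is such a pair because `[m]_q (q − 1) = q^m − 1`.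
Everything else rests on the multiplicativity `[a b]_t = [a]_t [b]_{t^a}` of q-analogues:
it gives `γ_m ∘ γ_{m'} = γ_{m m'}` on `ε`, and it shows that `γ_m` sends `s = q + ε [p]_q`
to `q^m + ε q^{m−1} [p m]_q = s^m`. Equivariance then holds because both `γ_m ∘ ψ` and
`ψ ∘ (f ↦ f(q^m))` are evaluation at `s^m`.
-/

section QAnalogue

variable {A : Type*} [CommRing A]

theorem qan_zero (t : A) : qan t 0 = 0 := by
  simp [qan]

theorem sub_one_mul_qan (t : A) (n : ℕ) : (t - 1) * qan t n = t ^ n - 1 :=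
  mul_geom_sum t n

theorem qan_add (t : A) (a b : ℕ) : qan t (a + b) = qan t a + t ^ a * qan t b := by
  simp only [qan, Finset.sum_range_add, pow_add, Finset.mul_sum]

theorem qan_mul (t : A) (a b : ℕ) : qan t (a * b) = qan t a * qan (t ^ a) b := by
  induction b with
  | zero => simp [qan_zero]
  | succ b ih =>
    rw [Nat.mul_succ, qan_add, ih, qan_add (t ^ a), ← pow_mul]
    simp only [qan, Finset.sum_range_one, pow_zero]
    ring

theorem map_qan {B : Type*} [CommRing B] (f : A →+* B) (t : A) (n : ℕ) :
    f (qan t n) = qan (f t) n := by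
  simp [qan]

end QAnalogue

namespace R₀

theorem epsR_sq : epsR ^ 2 = qR * (qR - 1) * epsR := by
  have h : AdjoinRoot.mk relPoly (Polynomial.X ^ 2 -
      Polynomial.C (Polynomial.X * (Polynomial.X - 1)) * Polynomial.X) = 0 :=
    AdjoinRoot.mk_self
  rw [map_sub, map_mul, map_pow, AdjoinRoot.mk_X, AdjoinRoot.mk_C, sub_eq_zero] at h
  simpa [qR, epsR, AdjoinRoot.algebraMap_eq] using h

variable {S : Type*} [CommRing S]

theorem ringHom_ext {f g : R₀ →+* S} (hq : f qR = g qR) (hε : f epsR = g epsR) : f = g := by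
  refine AdjoinRoot.ringHom_ext (Polynomial.ringHom_ext' (RingHom.ext_int _ _) ?_) hε
  simpa [qR, AdjoinRoot.algebraMap_eq] using hq

noncomputable def lift (t e : S) (h : e ^ 2 = t * (t - 1) * e) : R₀ →+* S :=
  AdjoinRoot.lift (Polynomial.aeval t : Polynomial ℤ →ₐ[ℤ] S).toRingHom e <| by
    simp [relPoly, h]

@[simp]
theorem lift_qR (t e : S) (h : e ^ 2 = t * (t - 1) * e) : lift t e h qR = t := by
  simp [lift, qR, AdjoinRoot.algebraMap_eq]

@[simp]
theorem lift_epsR (t e : S) (h : e ^ 2 = t * (t - 1) * e) : lift t e h epsR = e :=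
  AdjoinRoot.lift_root _

theorem epsR_mul_pow_mul_qan_sq (m : ℕ) :
    (epsR * qR ^ (m - 1) * qan qR m) ^ 2 =
      qR ^ m * (qR ^ m - 1) * (epsR * qR ^ (m - 1) * qan qR m) := by
  cases m with
  | zero => simp [qan_zero]
  | succ n =>
    simp only [Nat.add_sub_cancel]
    linear_combination (qR ^ (2 * n) * qan qR (n + 1) ^ 2) * epsR_sq +
      (epsR * qR ^ (2 * n + 1) * qan qR (n + 1)) * sub_one_mul_qan qR (n + 1)

noncomputable def gamma (m : ℕ) : R₀ →+* R₀ :=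
  lift (qR ^ m) (epsR * qR ^ (m - 1) * qan qR m) (epsR_mul_pow_mul_qan_sq m)

@[simp]
theorem gamma_qR (m : ℕ) : gamma m qR = qR ^ m :=
  lift_qR _ _ _

@[simp]
theorem gamma_epsR (m : ℕ) : gamma m epsR = epsR * qR ^ (m - 1) * qan qR m :=
  lift_epsR _ _ _

theorem eq_gamma {m : ℕ} {γ : R₀ →+* R₀}
    (h : γ qR = qR ^ m ∧ γ epsR = epsR * qR ^ (m - 1) * qan qR m) : γ = gamma m :=
  ringHom_ext (by rw [h.1, gamma_qR]) (by rw [h.2, gamma_epsR])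

theorem gamma_comp_gamma {m m' : ℕ} (hm : 1 ≤ m) (hm' : 1 ≤ m') :
    (gamma m).comp (gamma m') = gamma (m * m') := by
  obtain ⟨a, rfl⟩ := Nat.exists_eq_add_of_le' hm
  obtain ⟨b, rfl⟩ := Nat.exists_eq_add_of_le' hm'
  refine ringHom_ext ?_ ?_
  · simp [← pow_mul]
  · have hexp : (a + 1) * (b + 1) - 1 = a + (a + 1) * b := by
      have : (a + 1) * (b + 1) = a + (a + 1) * b + 1 := by ring
      omega
    simp only [RingHom.comp_apply, gamma_epsR, map_mul, map_pow, map_qan, gamma_qR,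
      Nat.add_sub_cancel, hexp, qan_mul qR (a + 1) (b + 1), pow_add, pow_mul]
    ring

theorem add_epsR_mul_qan_pow (p m : ℕ) :
    (qR + epsR * qan qR p) ^ m = qR ^ m + epsR * qR ^ (m - 1) * qan qR (p * m) := by
  induction m with
  | zero => simp [qan_zero]
  | succ n ih =>
    rw [pow_succ, ih, show p * (n + 1) = p + p * n by ring, qan_add, Nat.add_sub_cancel]
    cases n with
    | zero => simp [qan_zero]
    | succ k =>
      simp only [Nat.add_sub_cancel]
      linear_combination (qR ^ k * qan qR p * qan qR (p * (k + 1))) * epsR_sq +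
        (epsR * qR ^ (k + 1) * qan qR (p * (k + 1))) * sub_one_mul_qan qR p

theorem gamma_add_epsR_mul_qan (p m : ℕ) :
    gamma m (qR + epsR * qan qR p) = (qR + epsR * qan qR p) ^ m := by
  rw [add_epsR_mul_qan_pow, map_add, map_mul, gamma_qR, gamma_epsR, map_qan, gamma_qR,
    mul_comm p, qan_mul]
  ring

theorem gamma_psiMap (p m : ℕ) (f : Polynomial ℤ) :
    gamma m (psiMap p f) = psiMap p (f.comp (Polynomial.X ^ m)) := by
  have hℤ : (gamma m).comp (algebraMap ℤ R₀) = algebraMap ℤ R₀ := RingHom.ext_int _ _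
  simp only [psiMap, AlgHom.toRingHom_eq_coe, RingHom.coe_coe, Polynomial.aeval_def,
    Polynomial.hom_eval₂, hℤ, gamma_add_epsR_mul_qan, Polynomial.eval₂_comp,
    Polynomial.eval₂_X_pow]

end R₀

open R₀ in
theorem stmt15_general (p : ℕ) :
    (∀ m : ℕ, 1 ≤ m → ∃! γ : R₀ →+* R₀,
      γ qR = qR ^ m ∧ γ epsR = epsR * qR ^ (m - 1) * qan qR m) ∧
    (∀ m m' : ℕ, 1 ≤ m → 1 ≤ m' → ∀ γ γ' γ'' : R₀ →+* R₀,
      (γ qR = qR ^ m ∧ γ epsR = epsR * qR ^ (m - 1) * qan qR m) →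
      (γ' qR = qR ^ m' ∧ γ' epsR = epsR * qR ^ (m' - 1) * qan qR m') →
      (γ'' qR = qR ^ (m * m') ∧ γ'' epsR = epsR * qR ^ (m * m' - 1) * qan qR (m * m')) →
      γ'' = γ.comp γ') ∧
    (∀ m : ℕ, 1 ≤ m → ∀ γ : R₀ →+* R₀,
      (γ qR = qR ^ m ∧ γ epsR = epsR * qR ^ (m - 1) * qan qR m) →
      (∀ f : Polynomial ℤ, γ (psiMap p f) = psiMap p (f.comp (Polynomial.X ^ m))) ∧
      γ (qR + epsR * qan qR p) = qR ^ m + epsR * qR ^ (m - 1) * qan qR (p * m)) := by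
  refine ⟨fun m _ => ⟨gamma m, ⟨gamma_qR m, gamma_epsR m⟩, fun γ hγ => eq_gamma hγ⟩, ?_, ?_⟩
  · rintro m m' hm hm' γ γ' γ'' hγ hγ' hγ''
    rw [eq_gamma hγ, eq_gamma hγ', eq_gamma hγ'', gamma_comp_gamma hm hm']
  · rintro m - γ hγ
    rw [eq_gamma hγ, gamma_add_epsR_mul_qan, add_epsR_mul_qan_pow]
    exact ⟨gamma_psiMap p m, rfl⟩

/-- For every `m ≥ 1` there is a unique ring endomorphism `γ_m` of `R₀`
with `γ_m(q) = q^m` and `γ_m(ε) = ε·q^{m−1}·[m]_q`; these satisfy `γ_m ∘ γ_{m'} = γ_{m·m'}`,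
and they are equivariant for `ψ`: `γ_m(ψ(f)) = ψ(f(q^m))` for every `f ∈ ℤ[q]`, in
particular `γ_m(q + ε·[p]_q) = q^m + ε·q^{m−1}·[p·m]_q`. -/
theorem stmt15 (p : ℕ) (hp : p.Prime) :
    (∀ m : ℕ, 1 ≤ m → ∃! γ : R₀ →+* R₀,
      γ qR = qR ^ m ∧ γ epsR = epsR * qR ^ (m - 1) * qan qR m) ∧
    (∀ m m' : ℕ, 1 ≤ m → 1 ≤ m' → ∀ γ γ' γ'' : R₀ →+* R₀,
      (γ qR = qR ^ m ∧ γ epsR = epsR * qR ^ (m - 1) * qan qR m) →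
      (γ' qR = qR ^ m' ∧ γ' epsR = epsR * qR ^ (m' - 1) * qan qR m') →
      (γ'' qR = qR ^ (m * m') ∧ γ'' epsR = epsR * qR ^ (m * m' - 1) * qan qR (m * m')) →
      γ'' = γ.comp γ') ∧
    (∀ m : ℕ, 1 ≤ m → ∀ γ : R₀ →+* R₀,
      (γ qR = qR ^ m ∧ γ epsR = epsR * qR ^ (m - 1) * qan qR m) →
      (∀ f : Polynomial ℤ, γ (psiMap p f) = psiMap p (f.comp (Polynomial.X ^ m))) ∧
      γ (qR + epsR * qan qR p) = qR ^ m + epsR * qR ^ (m - 1) * qan qR (p * m)) :=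
  stmt15_general p
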